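/- Let G be a 2-connected matching-covered bipartite graph with bipartition X ⊔ Y. Then the following are equivalent: (i) for every non-edge (x,y) ∈ X × Y there exists a tight acceptable set T ⊆ X with x ∈ T and y ∉ N_G(T); (ii) every acceptable subset of X and every acceptable subset of Y is tight. -/

import Mathlib

attribute [local instance] Classical.propDecidable

/-- `X ⊔ Y` is a bipartition of the graph `G`. -/
def IsBipartition {V : Type*} (G : SimpleGraph V) [Fintype V] (X Y : Finset V) : Prop :=
  Disjoint X Y ∧ X ∪ Y = Finset.univ ∧
    ∀ x y : V, G.Adj x y → (x ∈ X ∧ y ∈ Y) ∨ (x ∈ Y ∧ y ∈ X)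

/-- `G` is connected and every edge of `G` lies in a perfect matching. -/
def MatchingCovered {V : Type*} (G : SimpleGraph V) : Prop :=
  G.Connected ∧ ∀ e ∈ G.edgeSet, ∃ M : G.Subgraph, M.IsPerfectMatching ∧ e ∈ M.edgeSet

/-- `G` is connected and remains connected after deleting any single vertex. -/
def TwoConnected {V : Type*} (G : SimpleGraph V) : Prop :=
  G.Connected ∧ ∀ v : V, (G.induce {u : V | u ≠ v}).Connected

/-- The neighborhood of the vertex set `A` in `G`. -/
noncomputable def nbhd {V : Type*} [Fintype V] (G : SimpleGraph V) (A : Finset V) : Finset V :=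
  Finset.univ.filter (fun y => ∃ x ∈ A, G.Adj x y)

/-- `T` is a tight subset: `|N_G(T)| = |T| + 1`. -/
def Tight {V : Type*} [Fintype V] (G : SimpleGraph V) (T : Finset V) : Prop :=
  (nbhd G T).card = T.card + 1

/-- `T ⊆ X` is an acceptable set of the bipartite graph `G` with bipartition `X ⊔ Y`:
the graph induced by the edges between `T` and `N_G(T)` is connected, and the induced
subgraph on `(X \ T) ⊔ (Y \ N_G(T))` is connected with at least one edge. -/
def Acceptable {V : Type*} [Fintype V] (G : SimpleGraph V) (X Y T : Finset V) : Prop :=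
  T.Nonempty ∧ T ⊆ X ∧
    (G.induce (↑(T ∪ nbhd G T) : Set V)).Connected ∧
    (G.induce (↑((X \ T) ∪ (Y \ nbhd G T)) : Set V)).Connected ∧
    ∃ x ∈ X \ T, ∃ y ∈ Y \ nbhd G T, G.Adj x y

/-!
Matching-coveredness gives the surplus `|N(A)| ≥ |A| + 1` for every nonempty `A ⊊ X`; together
with the submodularity of `N` this makes tight sets closed under unions that share a neighbour.
If `T` is acceptable then so is `S = Y \ N(T)`, with `N(S) = X \ T`, and since `|X| = |Y|` the set
`T` is tight iff `S` is. Under (i), merging the tight sets that (i) provides along the connected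
graph on `T ∪ N(T)` shows that each `y ∈ S` is avoided by a tight `M ⊇ T`; then `Y \ N(M)` is a
tight subset of `S` containing `y`, and merging these along the connected graph on `S ∪ N(S)`
shows that `S`, hence `T`, is tight. Conversely, a maximal `T ∋ x` inside `X \ N(y)` with
`T ∪ N(T)` connected is acceptable, because its complement is connected through `y`.
-/

section

open Finset

namespace SimpleGraph

variable {V : Type*} {G : SimpleGraph V}

theorem Connected.exists_adj_mem_not_mem (h : G.Connected) {K : Set V} {a b : V}
    (ha : a ∈ K) (hb : b ∉ K) : ∃ u ∈ K, ∃ w ∉ K, G.Adj u w := by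
  obtain ⟨p⟩ := h.preconnected a b
  obtain ⟨d, -, hd₁, hd₂⟩ := p.exists_boundary_dart K ha hb
  exact ⟨d.fst, hd₁, d.snd, hd₂, d.adj⟩

theorem Connected.mem_of_forall_adj (h : G.Connected) {K : Set V} {a : V} (ha : a ∈ K)
    (hK : ∀ u ∈ K, ∀ w, G.Adj u w → w ∈ K) (b : V) : b ∈ K := by
  by_contra hb
  obtain ⟨u, hu, w, hw, huw⟩ := h.exists_adj_mem_not_mem ha hb
  exact hw (hK u hu w huw)

theorem exists_adj_mem_not_mem_of_connected_induce {s K : Set V} (h : (G.induce s).Connected)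
    {a b : V} (has : a ∈ s) (hbs : b ∈ s) (ha : a ∈ K) (hb : b ∉ K) :
    ∃ u ∈ s, ∃ w ∈ s, u ∈ K ∧ w ∉ K ∧ G.Adj u w := by
  obtain ⟨⟨u, hus⟩, hu, ⟨w, hws⟩, hw, huw⟩ :=
    h.exists_adj_mem_not_mem (K := Subtype.val ⁻¹' K) (a := ⟨a, has⟩) (b := ⟨b, hbs⟩)
      ha hb
  exact ⟨u, hus, w, hws, hu, hw, huw⟩

/-- A path from a vertex outside `C` to `Z` cannot enter `C` before it reaches `Z`. -/
theorem connected_induce_compl (hG : G.Connected) {C Z : Set V} (hZ : (G.induce Z).Connected)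
    (hCZ : Disjoint C Z) (hC : ∀ u ∈ C, ∀ w, G.Adj u w → w ∈ C ∨ w ∈ Z) :
    (G.induce Cᶜ).Connected := by
  obtain ⟨⟨z₀, hz₀⟩⟩ := hZ.nonempty
  have hZC : Z ⊆ Cᶜ := hCZ.subset_compl_left
  set R : Set V :=
    {v | ∃ hv : v ∈ Cᶜ, (G.induce Cᶜ).Reachable ⟨z₀, hZC hz₀⟩ ⟨v, hv⟩}
  have hZR : Z ⊆ R := fun z hz =>
    ⟨hZC hz, (hZ.preconnected ⟨z₀, hz₀⟩ ⟨z, hz⟩).map (induceHomOfLE G hZC).toHom⟩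
  have hCR : ∀ v, v ∈ C ∪ R := by
    refine hG.mem_of_forall_adj (Or.inr (hZR hz₀)) ?_
    rintro u (hu | ⟨huC, hu⟩) w huw
    · exact (hC u hu w huw).imp id (hZR ·)
    · by_cases hw : w ∈ C
      · exact Or.inl hw
      · exact Or.inr ⟨hw, hu.trans
          (Adj.reachable (G := G.induce Cᶜ) (u := ⟨u, huC⟩) (v := ⟨w, hw⟩) huw)⟩
  refine (connected_iff_exists_forall_reachable _).2 ⟨⟨z₀, hZC hz₀⟩, ?_⟩
  rintro ⟨v, hv⟩
  exact ((hCR v).resolve_left hv).2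

theorem connected_induce_insert_neighborSet (v : V) :
    (G.induce (insert v (G.neighborSet v))).Connected := by
  refine (connected_iff_exists_forall_reachable _).2 ⟨⟨v, Set.mem_insert _ _⟩, ?_⟩
  rintro ⟨w, rfl | hw⟩
  · rfl
  · exact Adj.reachable (G := G.induce _) (u := ⟨v, Set.mem_insert _ _⟩) (v := ⟨w, Or.inr hw⟩)
      hw

theorem Subgraph.IsPerfectMatching.exists_involutive {M : G.Subgraph}
    (hM : M.IsPerfectMatching) :
    ∃ p : V → V, Function.Involutive p ∧ ∀ v w, M.Adj v w ↔ w = p v := by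
  choose p hp using fun v => Subgraph.isPerfectMatching_iff.1 hM v
  have hadj : ∀ v w, M.Adj v w ↔ w = p v := fun v w => ⟨(hp v).2 w, fun h => h ▸ (hp v).1⟩
  exact ⟨p, fun v => ((hadj _ _).1 ((hadj v _).2 rfl).symm).symm, hadj⟩

end SimpleGraph

variable {V : Type*} [Fintype V] {G : SimpleGraph V}

section Nbhd

@[simp]
theorem mem_nbhd {A : Finset V} {y : V} : y ∈ nbhd G A ↔ ∃ x ∈ A, G.Adj x y := by
  simp [nbhd]

theorem nbhd_mono {A B : Finset V} (h : A ⊆ B) : nbhd G A ⊆ nbhd G B := by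
  intro y
  simp only [mem_nbhd]
  exact fun ⟨x, hx, hxy⟩ => ⟨x, h hx, hxy⟩

theorem nbhd_union (A B : Finset V) : nbhd G (A ∪ B) = nbhd G A ∪ nbhd G B := by
  ext y
  simp [or_and_right, exists_or]

theorem nbhd_inter_subset (A B : Finset V) : nbhd G (A ∩ B) ⊆ nbhd G A ∩ nbhd G B :=
  subset_inter (nbhd_mono inter_subset_left) (nbhd_mono inter_subset_right)

theorem coe_singleton_union_nbhd (v : V) :
    (↑({v} ∪ nbhd G {v}) : Set V) = insert v (G.neighborSet v) := by
  ext
  simp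

theorem connected_induce_union_nbhd_union {A B : Finset V}
    (hA : (G.induce ↑(A ∪ nbhd G A)).Connected) (hB : (G.induce ↑(B ∪ nbhd G B)).Connected)
    (hAB : ((↑(A ∪ nbhd G A) : Set V) ∩ ↑(B ∪ nbhd G B)).Nonempty) :
    (G.induce ↑((A ∪ B) ∪ nbhd G (A ∪ B))).Connected := by
  have h := SimpleGraph.induce_union_connected hA.preconnected hB.preconnected hAB
  rwa [← coe_union, union_union_union_comm, ← nbhd_union] at h

end Nbhd

namespace IsBipartition

variable {X Y : Finset V}

theorem symm (h : IsBipartition G X Y) : IsBipartition G Y X :=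
  ⟨h.1.symm, by rw [union_comm, h.2.1], fun x y hxy => (h.2.2 x y hxy).symm⟩

theorem notMem_right (h : IsBipartition G X Y) {x : V} (hx : x ∈ X) : x ∉ Y :=
  disjoint_left.1 h.1 hx

theorem mem_or_mem (h : IsBipartition G X Y) (v : V) : v ∈ X ∨ v ∈ Y :=
  mem_union.1 (h.2.1 ▸ mem_univ v)

theorem mem_right_of_adj (h : IsBipartition G X Y) {x y : V} (hx : x ∈ X) (hxy : G.Adj x y) :
    y ∈ Y :=
  ((h.2.2 x y hxy).resolve_right fun h' => h.notMem_right hx h'.1).2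

theorem not_adj_of_mem_left (h : IsBipartition G X Y) {a b : V} (ha : a ∈ X) (hb : b ∈ X) :
    ¬ G.Adj a b :=
  fun hab => h.notMem_right hb (h.mem_right_of_adj ha hab)

theorem nbhd_subset (h : IsBipartition G X Y) {A : Finset V} (hA : A ⊆ X) : nbhd G A ⊆ Y := by
  intro y hy
  obtain ⟨x, hx, hxy⟩ := mem_nbhd.1 hy
  exact h.mem_right_of_adj (hA hx) hxy

theorem nbhd_sdiff_nbhd_subset (h : IsBipartition G X Y) (M : Finset V) :
    nbhd G (Y \ nbhd G M) ⊆ X \ M := by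
  intro x hx
  obtain ⟨y, hy, hyx⟩ := mem_nbhd.1 hx
  rw [mem_sdiff] at hy ⊢
  exact ⟨h.symm.mem_right_of_adj hy.1 hyx, fun hxM => hy.2 (mem_nbhd.2 ⟨x, hxM, hyx.symm⟩)⟩

theorem coe_compl_union_nbhd (h : IsBipartition G X Y) {T : Finset V} (hT : T ⊆ X) :
    (↑(T ∪ nbhd G T) : Set V)ᶜ = ↑((X \ T) ∪ (Y \ nbhd G T)) := by
  ext v
  have := h.mem_or_mem v
  have hTY : v ∈ T → v ∉ Y := fun hv => h.notMem_right (hT hv)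
  have hNX : v ∈ nbhd G T → v ∉ X := fun hv hvX => h.notMem_right hvX (h.nbhd_subset hT hv)
  simp only [Set.mem_compl_iff, coe_union, coe_sdiff, Set.mem_union, Set.mem_sdiff, mem_coe]
  tauto

end IsBipartition

theorem IsBipartition.card_eq_of_isPerfectMatching {X Y : Finset V} (h : IsBipartition G X Y)
    {M : G.Subgraph} (hM : M.IsPerfectMatching) : X.card = Y.card := by
  obtain ⟨p, hp, hadj⟩ := hM.exists_involutive
  have hmaps {A B : Finset V} (hAB : IsBipartition G A B) : ∀ a ∈ A, p a ∈ B :=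
    fun a ha => hAB.mem_right_of_adj ha (M.adj_sub ((hadj a _).2 rfl))
  exact card_nbij' p p (hmaps h) (hmaps h.symm) (fun a _ => hp a) (fun a _ => hp a)

namespace MatchingCovered

variable {X Y : Finset V}

theorem card_eq (hmc : MatchingCovered G) (hbip : IsBipartition G X Y) {u v : V}
    (huv : G.Adj u v) : X.card = Y.card := by
  obtain ⟨M, hM, -⟩ := hmc.2 s(u, v) huv
  exact hbip.card_eq_of_isPerfectMatching hM

/-- Some edge `y x` joins `N(A)` to `X \ A`, and a perfect matching through it maps `A`
injectively into `N(A) \ {y}`. -/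
theorem card_add_one_le_card_nbhd (hmc : MatchingCovered G) (hbip : IsBipartition G X Y)
    {A : Finset V} (hA : A.Nonempty) (hAX : A ⊆ X) (hAne : A ≠ X) :
    A.card + 1 ≤ (nbhd G A).card := by
  obtain ⟨a, ha⟩ := hA
  obtain ⟨b, hbX, hbA⟩ := exists_of_ssubset (hAX.ssubset_of_ne hAne)
  have hbN : b ∉ nbhd G A := fun hb => hbip.notMem_right hbX (hbip.nbhd_subset hAX hb)
  obtain ⟨y, hy, x, hx, hyx⟩ := hmc.1.exists_adj_mem_not_mem (K := ↑(A ∪ nbhd G A))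
    (a := a) (b := b) (by simp [ha]) (by simp [hbA, hbN])
  simp only [coe_union, Set.mem_union, mem_coe, not_or] at hy hx
  have hyN : y ∈ nbhd G A := hy.resolve_left fun hyA => hx.2 (mem_nbhd.2 ⟨y, hyA, hyx⟩)
  obtain ⟨M, hM, hMyx⟩ := hmc.2 s(y, x) hyx
  obtain ⟨p, hp, hadj⟩ := hM.exists_involutive
  have hxy : x = p y := (hadj y x).1 hMyx
  have hy_image : y ∉ A.image p := by
    simp only [mem_image, not_exists, not_and]
    intro a' ha' hay
    exact hx.1 (by rw [hxy, ← hay, hp a']; exact ha')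
  calc A.card + 1 = (insert y (A.image p)).card := by
        rw [card_insert_of_notMem hy_image, card_image_of_injective _ hp.injective]
    _ ≤ (nbhd G A).card := by
        refine card_le_card (insert_subset hyN (image_subset_iff.2 fun a' ha' => ?_))
        exact mem_nbhd.2 ⟨a', ha', M.adj_sub ((hadj a' _).2 rfl)⟩

end MatchingCovered

namespace Tight

variable {X Y : Finset V}

theorem union (hbip : IsBipartition G X Y) (hmc : MatchingCovered G) {A B : Finset V}
    (hAX : A ⊆ X) (hBX : B ⊆ X) (hA : Tight G A) (hB : Tight G B)
    (hAB : (nbhd G A ∩ nbhd G B).Nonempty) (hne : A ∪ B ≠ X) : Tight G (A ∪ B) := by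
  obtain ⟨y, hy⟩ := hAB
  obtain ⟨a, ha, -⟩ := mem_nbhd.1 (mem_inter.1 hy).1
  have hlow := hmc.card_add_one_le_card_nbhd hbip ⟨a, mem_union_left _ ha⟩
    (union_subset hAX hBX) hne
  have hinter : (A ∩ B).card + 1 ≤ (nbhd G A ∩ nbhd G B).card := by
    rcases (A ∩ B).eq_empty_or_nonempty with h | h
    · rw [h, card_empty]
      exact card_pos.2 ⟨y, hy⟩
    · have hsub : A ∩ B ⊆ X := inter_subset_left.trans hAX
      have hne' : A ∩ B ≠ X := fun h' => hne (subset_antisymm (union_subset hAX hBX)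
        (h' ▸ inter_subset_left.trans subset_union_left))
      exact (hmc.card_add_one_le_card_nbhd hbip h hsub hne').trans
        (card_le_card (nbhd_inter_subset A B))
  have h₁ := card_union_add_card_inter (nbhd G A) (nbhd G B)
  have h₂ := card_union_add_card_inter A B
  unfold Tight at hA hB ⊢
  rw [nbhd_union] at hlow ⊢
  omega

/-- The neighbours of `Y \ N(M)` lie in `X \ M`, which has exactly one more vertex. -/
theorem sdiff_nbhd (hbip : IsBipartition G X Y) (hmc : MatchingCovered G)
    (hXY : X.card = Y.card) {M : Finset V} (hMX : M ⊆ X) (hM : Tight G M)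
    (hN : (nbhd G M).Nonempty) (hS : (Y \ nbhd G M).Nonempty) : Tight G (Y \ nbhd G M) := by
  have hNY := hbip.nbhd_subset hMX
  have hSY : Y \ nbhd G M ≠ Y := fun h => by
    obtain ⟨y, hy⟩ := hN
    exact (mem_sdiff.1 (h.symm ▸ hNY hy : y ∈ Y \ nbhd G M)).2 hy
  have hlow := hmc.card_add_one_le_card_nbhd hbip.symm hS sdiff_subset hSY
  have hup := card_le_card (hbip.nbhd_sdiff_nbhd_subset M)
  rw [card_sdiff_of_subset hMX] at hup
  have := card_le_card hMX
  have := card_le_card hNY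
  unfold Tight at hM ⊢
  rw [card_sdiff_of_subset hNY] at hlow ⊢
  omega

end Tight

/-- Take a member `A` maximising `|A ∩ R|`. If it missed a vertex of `R`, a path inside
`R ∪ N(R)` would leave `(R ∩ A) ∪ (N(R) ∩ N(A))` along an edge from `N(R) ∩ N(A)` to some
`w ∈ R \ A`, and merging `A` with a member containing `w` would enlarge `A ∩ R`. -/
theorem IsBipartition.exists_superset_of_union_closed {X Y : Finset V}
    (hbip : IsBipartition G X Y) {R : Finset V} (hRX : R ⊆ X)
    (hR : (G.induce ↑(R ∪ nbhd G R)).Connected) (P : Finset V → Prop)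
    (hP : ∀ A B, P A → P B → (nbhd G A ∩ nbhd G B).Nonempty → P (A ∪ B))
    (hcover : ∀ r ∈ R, ∃ A, P A ∧ r ∈ A) : ∃ A, P A ∧ R ⊆ A := by
  have hNR : ∀ {v}, v ∈ nbhd G R → v ∉ R := fun hv hvR =>
    hbip.notMem_right (hRX hvR) (hbip.nbhd_subset hRX hv)
  obtain ⟨r₀, hr₀⟩ : R.Nonempty := by
    obtain ⟨⟨v, hv⟩⟩ := hR.nonempty
    rcases mem_union.1 (mem_coe.1 hv) with hv | hv
    · exact ⟨v, hv⟩
    · obtain ⟨x, hx, -⟩ := mem_nbhd.1 hv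
      exact ⟨x, hx⟩
  obtain ⟨A₀, hA₀, hr₀A₀⟩ := hcover r₀ hr₀
  obtain ⟨A, hA, hmax⟩ := exists_max_image (univ.filter P) (fun A => (A ∩ R).card)
    ⟨A₀, mem_filter.2 ⟨mem_univ _, hA₀⟩⟩
  replace hA : P A := (mem_filter.1 hA).2
  replace hmax : ∀ B, P B → (B ∩ R).card ≤ (A ∩ R).card :=
    fun B hB => hmax B (mem_filter.2 ⟨mem_univ _, hB⟩)
  obtain ⟨a, ha⟩ : (A ∩ R).Nonempty :=
    card_pos.1 ((card_pos.2 ⟨r₀, mem_inter.2 ⟨hr₀A₀, hr₀⟩⟩).trans_le (hmax A₀ hA₀))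
  obtain ⟨haA, haR⟩ := mem_inter.1 ha
  refine ⟨A, hA, fun t ht => ?_⟩
  by_contra htA
  obtain ⟨u, hu, w, hw, huK, hwK, huw⟩ := SimpleGraph.exists_adj_mem_not_mem_of_connected_induce
    (K := ↑((R ∩ A) ∪ (nbhd G R ∩ nbhd G A))) hR (a := a) (b := t)
    (by simp [haR]) (by simp [ht]) (by simp [haR, haA])
    (by simpa only [coe_union, coe_inter, Set.mem_union, Set.mem_inter_iff, mem_coe, not_or,
      not_and] using ⟨fun _ => htA, fun h _ => hNR h ht⟩)
  simp only [coe_union, coe_inter, Set.mem_union, Set.mem_inter_iff, mem_coe, not_or,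
    not_and] at hu hw huK hwK
  rcases huK with ⟨huR, huA⟩ | ⟨huNR, huNA⟩
  · exact hwK.2 (mem_nbhd.2 ⟨u, huR, huw⟩) (mem_nbhd.2 ⟨u, huA, huw⟩)
  have hwR : w ∈ R := hw.resolve_right fun hwN =>
    hbip.symm.not_adj_of_mem_left (hbip.nbhd_subset hRX huNR) (hbip.nbhd_subset hRX hwN) huw
  obtain ⟨B, hB, hwB⟩ := hcover w hwR
  have hAB := hmax (A ∪ B)
    (hP A B hA hB ⟨u, mem_inter.2 ⟨huNA, mem_nbhd.2 ⟨w, hwB, huw.symm⟩⟩⟩)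
  refine absurd hAB (not_le.2 (card_lt_card ⟨inter_subset_inter_right subset_union_left, ?_⟩))
  exact fun h => hwK.1 hwR (mem_inter.1 (h (mem_inter.2 ⟨mem_union_right _ hwB, hwR⟩))).1

namespace Acceptable

variable {X Y T : Finset V}

theorem nbhd_nonempty (hT : Acceptable G X Y T) (hG : G.Connected) : (nbhd G T).Nonempty := by
  obtain ⟨x, -, y, -, hxy⟩ := hT.2.2.2.2
  have := nontrivial_of_ne x y hxy.ne
  obtain ⟨t, ht⟩ := hT.1
  obtain ⟨w, hw⟩ := hG.preconnected.exists_adj_of_nontrivial t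
  exact ⟨w, mem_nbhd.2 ⟨t, ht, hw⟩⟩

theorem nbhd_sdiff_nbhd (hT : Acceptable G X Y T) (hbip : IsBipartition G X Y) :
    nbhd G (Y \ nbhd G T) = X \ T := by
  refine subset_antisymm (hbip.nbhd_sdiff_nbhd_subset T) fun x hx => ?_
  obtain ⟨-, -, -, hD, -, -, y, hy, -⟩ := hT
  have hxX := (mem_sdiff.1 hx).1
  obtain ⟨u, -, w, hw, rfl, -, huw⟩ := SimpleGraph.exists_adj_mem_not_mem_of_connected_induce
    (K := {x}) hD (a := x) (b := y) (mem_coe.2 (mem_union_left _ hx))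
    (mem_coe.2 (mem_union_right _ hy)) rfl
    fun h => hbip.notMem_right hxX (h ▸ (mem_sdiff.1 hy).1)
  have hwS : w ∈ Y \ nbhd G T := by
    simp only [coe_union, Set.mem_union, mem_coe] at hw
    exact hw.resolve_left fun hw => hbip.not_adj_of_mem_left hxX (mem_sdiff.1 hw).1 huw
  exact mem_nbhd.2 ⟨w, hwS, huw.symm⟩

theorem sdiff_nbhd (hT : Acceptable G X Y T) (hbip : IsBipartition G X Y) (hG : G.Connected) :
    Acceptable G Y X (Y \ nbhd G T) := by
  have hN := hT.nbhd_sdiff_nbhd hbip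
  have hNY := hbip.nbhd_subset hT.2.1
  obtain ⟨w, hw⟩ := hT.nbhd_nonempty hG
  obtain ⟨t, ht, htw⟩ := mem_nbhd.1 hw
  obtain ⟨-, hTX, hC, hD, -, -, y, hy, -⟩ := hT
  refine ⟨⟨y, hy⟩, sdiff_subset, ?_, ?_, w, ?_, t, ?_, htw.symm⟩
  · rwa [hN, union_comm]
  · rwa [hN, Finset.sdiff_sdiff_eq_self hNY, Finset.sdiff_sdiff_eq_self hTX, union_comm]
  · rwa [Finset.sdiff_sdiff_eq_self hNY]
  · rwa [hN, Finset.sdiff_sdiff_eq_self hTX]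

theorem exists_tight_superset (hT : Acceptable G X Y T) (hbip : IsBipartition G X Y)
    (hmc : MatchingCovered G)
    (hsep : ∀ x ∈ X, ∀ y ∈ Y, ¬ G.Adj x y →
      ∃ T : Finset V, Acceptable G X Y T ∧ Tight G T ∧ x ∈ T ∧ y ∉ nbhd G T)
    {y : V} (hy : y ∈ Y \ nbhd G T) : ∃ M ⊆ X, Tight G M ∧ T ⊆ M ∧ y ∉ nbhd G M := by
  obtain ⟨hyY, hyT⟩ := mem_sdiff.1 hy
  obtain ⟨t₀, ht₀⟩ := hT.1
  have := nontrivial_of_ne t₀ y fun h => hbip.notMem_right (hT.2.1 ht₀) (h ▸ hyY)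
  obtain ⟨z, hyz⟩ := hmc.1.preconnected.exists_adj_of_nontrivial y
  have hzX : z ∈ X := hbip.symm.mem_right_of_adj hyY hyz
  set P : Finset V → Prop := fun M => M ⊆ X ∧ Tight G M ∧ y ∉ nbhd G M
  have hunion : ∀ A B, P A → P B → (nbhd G A ∩ nbhd G B).Nonempty → P (A ∪ B) := by
    rintro A B ⟨hAX, hA, hyA⟩ ⟨hBX, hB, hyB⟩ hAB
    have hyAB : y ∉ nbhd G (A ∪ B) := by
      rw [nbhd_union, mem_union]
      exact not_or.2 ⟨hyA, hyB⟩
    refine ⟨union_subset hAX hBX, hA.union hbip hmc hAX hBX hB hAB fun hABX => ?_, hyAB⟩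
    exact hyAB (mem_nbhd.2 ⟨z, hABX ▸ hzX, hyz.symm⟩)
  have hcover : ∀ t ∈ T, ∃ U, P U ∧ t ∈ U := by
    intro t ht
    obtain ⟨U, hU, hUt, htU, hyU⟩ :=
      hsep t (hT.2.1 ht) y hyY fun h => hyT (mem_nbhd.2 ⟨t, ht, h⟩)
    exact ⟨U, ⟨hU.2.1, hUt, hyU⟩, htU⟩
  obtain ⟨M, ⟨hMX, hM, hyM⟩, hTM⟩ :=
    hbip.exists_superset_of_union_closed hT.2.1 hT.2.2.1 _ hunion hcover
  exact ⟨M, hMX, hM, hTM, hyM⟩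

theorem tight_of_tight_sdiff_nbhd (hT : Acceptable G X Y T) (hbip : IsBipartition G X Y)
    (hmc : MatchingCovered G) (hS : Tight G (Y \ nbhd G T)) : Tight G T := by
  obtain ⟨x, hx, _, -, hxy⟩ := hT.2.2.2.2
  have hNS := hT.nbhd_sdiff_nbhd hbip
  have hTX := hT.2.1
  have h := hS.sdiff_nbhd hbip.symm hmc (hmc.card_eq hbip hxy).symm sdiff_subset
    (hNS ▸ ⟨x, hx⟩) (by rw [hNS, Finset.sdiff_sdiff_eq_self hTX]; exact hT.1)
  rwa [hNS, Finset.sdiff_sdiff_eq_self hTX] at h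

theorem tight (hT : Acceptable G X Y T) (hbip : IsBipartition G X Y) (hmc : MatchingCovered G)
    (hsep : ∀ x ∈ X, ∀ y ∈ Y, ¬ G.Adj x y →
      ∃ T : Finset V, Acceptable G X Y T ∧ Tight G T ∧ x ∈ T ∧ y ∉ nbhd G T) :
    Tight G T := by
  obtain ⟨_, -, _, -, hxy⟩ := hT.2.2.2.2
  have hXY := hmc.card_eq hbip hxy
  have hNS := hT.nbhd_sdiff_nbhd hbip
  have hTX := hT.2.1
  have hNT := hT.nbhd_nonempty hmc.1
  set S := Y \ nbhd G T
  have hSY : S ≠ Y := fun h => by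
    obtain ⟨w, hw⟩ := hNT
    exact (mem_sdiff.1 (h.symm ▸ hbip.nbhd_subset hTX hw : w ∈ S)).2 hw
  set P : Finset V → Prop := fun Z => Z ⊆ S ∧ Tight G Z
  have hunion : ∀ A B, P A → P B → (nbhd G A ∩ nbhd G B).Nonempty → P (A ∪ B) := by
    rintro A B ⟨hAS, hA⟩ ⟨hBS, hB⟩ hAB
    refine ⟨union_subset hAS hBS, hA.union hbip.symm hmc (hAS.trans sdiff_subset)
      (hBS.trans sdiff_subset) hB hAB fun h => hSY ?_⟩
    exact subset_antisymm sdiff_subset (h.symm.subset.trans (union_subset hAS hBS))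
  have hcover : ∀ y ∈ S, ∃ Z, P Z ∧ y ∈ Z := by
    intro y hy
    obtain ⟨M, hMX, hM, hTM, hyM⟩ := hT.exists_tight_superset hbip hmc hsep hy
    have hyM' : y ∈ Y \ nbhd G M := mem_sdiff.2 ⟨(mem_sdiff.1 hy).1, hyM⟩
    exact ⟨Y \ nbhd G M, ⟨sdiff_subset_sdiff le_rfl (nbhd_mono hTM),
      hM.sdiff_nbhd hbip hmc hXY hMX (hNT.mono (nbhd_mono hTM)) ⟨y, hyM'⟩⟩, hyM'⟩
  have hSc : (G.induce ↑(S ∪ nbhd G S)).Connected := by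
    rw [hNS, union_comm]
    exact hT.2.2.2.1
  obtain ⟨Z, ⟨hZS, hZ⟩, hSZ⟩ :=
    hbip.symm.exists_superset_of_union_closed sdiff_subset hSc P hunion hcover
  have hS : Tight G S := subset_antisymm hZS hSZ ▸ hZ
  exact hT.tight_of_tight_sdiff_nbhd hbip hmc hS

end Acceptable

theorem exists_connected_union_nbhd_closed (W : Finset V) {x : V} (hx : x ∈ W) :
    ∃ T ⊆ W, x ∈ T ∧ (G.induce ↑(T ∪ nbhd G T)).Connected ∧
      ∀ u ∈ nbhd G T, ∀ w ∈ W, G.Adj u w → w ∈ T := by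
  have hstar : ∀ v, (G.induce ↑({v} ∪ nbhd G {v})).Connected := fun v => by
    rw [coe_singleton_union_nbhd]
    exact G.connected_induce_insert_neighborSet v
  obtain ⟨T, hT, hmax⟩ := exists_max_image
    (W.powerset.filter fun T => x ∈ T ∧ (G.induce ↑(T ∪ nbhd G T)).Connected) card
    ⟨{x}, mem_filter.2 ⟨by simpa using hx, mem_singleton_self x, hstar x⟩⟩
  simp only [mem_filter, mem_powerset] at hT hmax
  obtain ⟨hTW, hxT, hTc⟩ := hT
  refine ⟨T, hTW, hxT, hTc, fun u hu w hw huw => ?_⟩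
  by_contra hwT
  have hc := connected_induce_union_nbhd_union (hstar w) hTc
    ⟨u, by simp [huw.symm], by simp [hu]⟩
  have := hmax ({w} ∪ T)
    ⟨union_subset (singleton_subset_iff.2 hw) hTW, mem_union_right _ hxT, hc⟩
  rw [← insert_eq, card_insert_of_notMem hwT] at this
  omega

/-- By the maximality of `T`, every edge leaving `T ∪ N(T)` ends in `N(y)`. -/
theorem IsBipartition.exists_acceptable {X Y : Finset V} (hbip : IsBipartition G X Y)
    (hG : G.Connected) {x y : V} (hx : x ∈ X) (hy : y ∈ Y) (hxy : ¬ G.Adj x y) :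
    ∃ T, Acceptable G X Y T ∧ x ∈ T ∧ y ∉ nbhd G T := by
  have hxW : x ∈ X \ nbhd G {y} := mem_sdiff.2 ⟨hx, by simpa [G.adj_comm] using hxy⟩
  obtain ⟨T, hTW, hxT, hTc, hclosed⟩ := exists_connected_union_nbhd_closed (G := G) _ hxW
  have hTX : T ⊆ X := hTW.trans sdiff_subset
  have hTy : ∀ {v}, v ∈ T → ¬ G.Adj y v := fun hv hyv =>
    (mem_sdiff.1 (hTW hv)).2 (mem_nbhd.2 ⟨y, mem_singleton_self y, hyv⟩)
  have hyN : y ∉ nbhd G T := fun h => by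
    obtain ⟨t, ht, hty⟩ := mem_nbhd.1 h
    exact hTy ht hty.symm
  have := nontrivial_of_ne x y fun h => hbip.notMem_right hx (h ▸ hy)
  obtain ⟨z, hyz⟩ := hG.preconnected.exists_adj_of_nontrivial y
  have hzX : z ∈ X := hbip.symm.mem_right_of_adj hy hyz
  have hdisj : Disjoint (↑(T ∪ nbhd G T) : Set V) (insert y (G.neighborSet y)) := by
    rw [Set.disjoint_left]
    intro v hv
    rcases mem_union.1 (mem_coe.1 hv) with hv | hv
    · rintro (rfl | hyv)
      exacts [hbip.notMem_right (hTX hv) hy, hTy hv hyv]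
    · rintro (rfl | hyv)
      exacts [hyN hv, hbip.symm.not_adj_of_mem_left hy (hbip.nbhd_subset hTX hv) hyv]
  have hleave : ∀ u ∈ (↑(T ∪ nbhd G T) : Set V), ∀ w, G.Adj u w →
      w ∈ (↑(T ∪ nbhd G T) : Set V) ∨ w ∈ insert y (G.neighborSet y) := by
    intro u hu w huw
    simp only [coe_union, Set.mem_union, mem_coe, Set.mem_insert_iff,
      SimpleGraph.mem_neighborSet] at hu ⊢
    rcases hu with hu | hu
    · exact Or.inl (Or.inr (mem_nbhd.2 ⟨u, hu, huw⟩))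
    · by_cases hyw : G.Adj y w
      · exact Or.inr (Or.inr hyw)
      · refine Or.inl (Or.inl (hclosed u hu w (mem_sdiff.2 ⟨?_, ?_⟩) huw))
        · exact hbip.symm.mem_right_of_adj (hbip.nbhd_subset hTX hu) huw
        · simpa [G.adj_comm] using hyw
  have hD := G.connected_induce_compl hG (G.connected_induce_insert_neighborSet y) hdisj hleave
  rw [hbip.coe_compl_union_nbhd hTX] at hD
  exact ⟨T, ⟨⟨x, hxT⟩, hTX, hTc, hD, z, mem_sdiff.2 ⟨hzX, fun hzT => hTy hzT hyz⟩,
    y, mem_sdiff.2 ⟨hy, hyN⟩, hyz.symm⟩, hxT, hyN⟩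

end

theorem stmt13_general {V : Type*} [Fintype V] (G : SimpleGraph V) (X Y : Finset V)
    (hbip : IsBipartition G X Y) (hmc : MatchingCovered G) :
    (∀ x ∈ X, ∀ y ∈ Y, ¬ G.Adj x y →
        ∃ T : Finset V, Acceptable G X Y T ∧ Tight G T ∧ x ∈ T ∧ y ∉ nbhd G T) ↔
      ((∀ T : Finset V, Acceptable G X Y T → Tight G T) ∧
        (∀ S : Finset V, Acceptable G Y X S → Tight G S)) := by
  constructor
  · intro hsep
    refine ⟨fun T hT => hT.tight hbip hmc hsep, fun S hS => ?_⟩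
    have hT := (hS.sdiff_nbhd hbip.symm hmc.1).tight hbip hmc hsep
    exact hS.tight_of_tight_sdiff_nbhd hbip.symm hmc hT
  · rintro ⟨hX, -⟩ x hx y hy hxy
    obtain ⟨T, hT, hxT, hyT⟩ := hbip.exists_acceptable hmc.1 hx hy hxy
    exact ⟨T, hT, hX T hT, hxT, hyT⟩

theorem stmt13 {V : Type*} [Fintype V] (G : SimpleGraph V) (X Y : Finset V)
    (hbip : IsBipartition G X Y) (hmc : MatchingCovered G) (h2 : TwoConnected G) :
    (∀ x ∈ X, ∀ y ∈ Y, ¬ G.Adj x y →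
        ∃ T : Finset V, Acceptable G X Y T ∧ Tight G T ∧ x ∈ T ∧ y ∉ nbhd G T) ↔
      ((∀ T : Finset V, Acceptable G X Y T → Tight G T) ∧
        (∀ S : Finset V, Acceptable G Y X S → Tight G S)) :=
  stmt13_general G X Y hbip hmc
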